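/- Let X be a locally compact topological space, Y a Hausdorff uniform space, and equip C(X,Y) with the topology of uniform convergence τ_uc. If a subfamily F ⊆ C(X,Y) is pointwise relatively compact, equicontinuous, and satisfies the extension property, then F is relatively τ_uc-compact. -/

import Mathlib

open Set Filter Topology
open scoped UniformConvergence Uniformity

/-!
By Arzelà–Ascoli, equicontinuity and pointwise relative compactness make `F` relatively compact
for compact convergence. The extension property says that on `F` compact convergence controls
uniform convergence; by approximating on a compact set together with one extra point, it passes
to the closure of `F` for compact convergence. There the identity map into the topology of uniform
convergence is therefore continuous, so the image of that compact closure is a compact set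
containing `F`.
-/

namespace UniformOnFun

variable {X Y : Type*} [UniformSpace Y] {𝔖 : Set (Set X)}

def HasExtensionProperty (G : Set (X →ᵤ[𝔖] Y)) : Prop :=
  ∀ V ∈ 𝓤 Y, ∃ D ∈ 𝔖, ∃ U ∈ 𝓤 Y, ∀ f ∈ G, ∀ g ∈ G,
    (∀ x ∈ D, (toFun 𝔖 f x, toFun 𝔖 g x) ∈ U) → ∀ x, (toFun 𝔖 f x, toFun 𝔖 g x) ∈ V

theorem exists_mem_near_on_and_near_at_of_mem_closure (h𝔖 : ⋃₀ 𝔖 = univ)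
    {G : Set (X →ᵤ[𝔖] Y)} {g : X →ᵤ[𝔖] Y} (hg : g ∈ closure G) {D : Set X} (hD : D ∈ 𝔖)
    (x : X) {W : Set (Y × Y)} (hW : W ∈ 𝓤 Y) :
    ∃ f ∈ G, (∀ z ∈ D, (toFun 𝔖 g z, toFun 𝔖 f z) ∈ W) ∧ (toFun 𝔖 g x, toFun 𝔖 f x) ∈ W := by
  have hD' : ∀ᶠ f in 𝓝 g, ∀ z ∈ D, (toFun 𝔖 g z, toFun 𝔖 f z) ∈ W :=
    UniformOnFun.gen_mem_nhds Y 𝔖 g hD hW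
  have hx : ∀ᶠ f in 𝓝 g, (toFun 𝔖 g x, toFun 𝔖 f x) ∈ W :=
    (uniformContinuous_eval_of_mem_sUnion Y 𝔖 (h𝔖 ▸ mem_univ x)).continuous.continuousAt
      (mem_nhds_left _ hW)
  exact ((mem_closure_iff_frequently.mp hg).and_eventually (hD'.and hx)).exists

theorem HasExtensionProperty.closure (h𝔖 : ⋃₀ 𝔖 = univ) {G : Set (X →ᵤ[𝔖] Y)}
    (hG : HasExtensionProperty G) : HasExtensionProperty (closure G) := by
  refine fun V hV => ?_
  obtain ⟨V₁, hV₁, hV₁symm, hV₁V⟩ := comp_comp_symm_mem_uniformity_sets hV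
  obtain ⟨D, hD, U, hU, hDU⟩ := hG V₁ hV₁
  obtain ⟨U₁, hU₁, hU₁symm, hU₁U⟩ := comp_comp_symm_mem_uniformity_sets hU
  refine ⟨D, hD, U₁, hU₁, fun g hg g' hg' hgg' x => ?_⟩
  obtain ⟨f, hfG, hgfD, hgfx⟩ :=
    exists_mem_near_on_and_near_at_of_mem_closure h𝔖 hg hD x (inter_mem hU₁ hV₁)
  obtain ⟨f', hf'G, hg'f'D, hg'f'x⟩ :=
    exists_mem_near_on_and_near_at_of_mem_closure h𝔖 hg' hD x (inter_mem hU₁ hV₁)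
  have hff'D : ∀ z ∈ D, (toFun 𝔖 f z, toFun 𝔖 f' z) ∈ U := fun z hz =>
    hU₁U ⟨_, ⟨_, hU₁symm.symm _ _ (hgfD z hz).1, hgg' z hz⟩, (hg'f'D z hz).1⟩
  have hff'x := hDU f hfG f' hf'G hff'D x
  exact hV₁V ⟨_, ⟨_, hgfx.2, hff'x⟩, hV₁symm.symm _ _ hg'f'x.2⟩

theorem HasExtensionProperty.continuousOn_toUniformFun {G : Set (X →ᵤ[𝔖] Y)}
    (hG : HasExtensionProperty G) :
    ContinuousOn (fun g : X →ᵤ[𝔖] Y => UniformFun.ofFun (toFun 𝔖 g)) G := by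
  refine fun g hg => ?_
  rw [ContinuousWithinAt, (UniformFun.hasBasis_nhds X Y _).tendsto_right_iff]
  intro V hV
  obtain ⟨D, hD, U, hU, hDU⟩ := hG V hV
  filter_upwards [nhdsWithin_le_nhds (UniformOnFun.gen_mem_nhds Y 𝔖 g hD hU), self_mem_nhdsWithin]
    with k hgk hkG using hDU g hg k hkG hgk

end UniformOnFun

open UniformOnFun in
theorem relativelyCompact_uniformConvergence_of_extensionProperty_general
    {X Y : Type*} [TopologicalSpace X]
    [UniformSpace Y] [T2Space Y]
    (F : Set (X →ᵤ Y))
    (hpt : ∀ x : X,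
      IsCompact (closure ((fun f : X →ᵤ Y => UniformFun.toFun f x) '' F)))
    (heq : ∀ x : X, ∀ V ∈ uniformity Y, ∃ U ∈ nhds x, ∀ f ∈ F, ∀ x' ∈ U,
      (UniformFun.toFun f x, UniformFun.toFun f x') ∈ V)
    (hext : ∀ V ∈ uniformity Y, ∃ D : Set X, IsCompact D ∧ ∃ U ∈ uniformity Y,
      ∀ f ∈ F, ∀ g ∈ F,
        (∀ x ∈ D, (UniformFun.toFun f x, UniformFun.toFun g x) ∈ U) →
        ∀ x : X, (UniformFun.toFun f x, UniformFun.toFun g x) ∈ V) :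
    IsCompact (closure F) := by
  let 𝔖 : Set (Set X) := {K | IsCompact K}
  let G : Set (X →ᵤ[𝔖] Y) := (fun f : X →ᵤ Y => ofFun 𝔖 (UniformFun.toFun f)) '' F
  have hG_eqcont : Equicontinuous (toFun 𝔖 ∘ ((↑) : G → X →ᵤ[𝔖] Y)) := by
    intro x V hV
    obtain ⟨U, hU, hUV⟩ := heq x V hV
    filter_upwards [hU] with x' hx'
    rintro ⟨_, f, hf, rfl⟩
    exact hUV f hf x' hx'
  have hG_compact : IsCompact (closure G) :=
    ArzelaAscoli.isCompact_closure_of_isClosedEmbedding (𝔖 := 𝔖) (fun _ hK => hK) .id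
      (fun K _ => hG_eqcont.equicontinuousOn K)
      fun _ _ x _ => ⟨_, hpt x, by rintro _ ⟨f, hf, rfl⟩; exact subset_closure ⟨f, hf, rfl⟩⟩
  have hG_ext : HasExtensionProperty G := fun V hV => by
    obtain ⟨D, hD, U, hU, hDU⟩ := hext V hV
    exact ⟨D, hD, U, hU, by rintro _ ⟨f, hf, rfl⟩ _ ⟨g, hg, rfl⟩; exact hDU f hf g hg⟩
  have h𝔖 : ⋃₀ 𝔖 = univ :=
    eq_univ_of_forall fun x => mem_sUnion_of_mem (mem_singleton x) isCompact_singleton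
  exact (hG_compact.image_of_continuousOn (hG_ext.closure h𝔖).continuousOn_toUniformFun)
    |>.closure_of_subset fun f hf => ⟨_, subset_closure ⟨f, hf, rfl⟩, rfl⟩

/-- If a family `F` of continuous maps from a locally compact space `X` to a Hausdorff
uniform space `Y` is pointwise relatively compact, equicontinuous, and satisfies the
extension property, then `F` is relatively compact for the topology of uniform
convergence. -/
theorem relativelyCompact_uniformConvergence_of_extensionProperty
    {X Y : Type*} [TopologicalSpace X] [WeaklyLocallyCompactSpace X]
    [UniformSpace Y] [T2Space Y]
    (F : Set (X →ᵤ Y)) (hF : ∀ f ∈ F, Continuous (UniformFun.toFun f))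
    (hpt : ∀ x : X,
      IsCompact (closure ((fun f : X →ᵤ Y => UniformFun.toFun f x) '' F)))
    (heq : ∀ x : X, ∀ V ∈ uniformity Y, ∃ U ∈ nhds x, ∀ f ∈ F, ∀ x' ∈ U,
      (UniformFun.toFun f x, UniformFun.toFun f x') ∈ V)
    (hext : ∀ V ∈ uniformity Y, ∃ D : Set X, IsCompact D ∧ ∃ U ∈ uniformity Y,
      ∀ f ∈ F, ∀ g ∈ F,
        (∀ x ∈ D, (UniformFun.toFun f x, UniformFun.toFun g x) ∈ U) →
        ∀ x : X, (UniformFun.toFun f x, UniformFun.toFun g x) ∈ V) :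
    IsCompact (closure F) :=
  relativelyCompact_uniformConvergence_of_extensionProperty_general F hpt heq hext
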